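/- arXiv:0710.3147 — 3 statements merged into one kernel-verified Lean document; each statement's English description precedes it below -/
import Mathlib

section
/- A morphism f : L_• → K_• of simplicial presheaves on a site C is a local acyclic fibration if and only if for every inclusion P_• ↪ Q_• of simplicial sets each having only finitely many non-degenerate simplices, every object U of C, and every commutative square of simplicial sets with top edge P_• → L_•(U), left edge the inclusion P_• ↪ Q_•, right edge f(U), and bottom edge Q_• → K_•(U), there is a covering sieve R of U such that for every morphism (V → U) in R the square obtained by restricting along V → U admits a diagonal lift Q_• → L_•(V). -/
universe u

open CategoryTheory Simplicial Opposite SimplexCategory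

/-- A simplicial presheaf on a (small) site `C`: a presheaf of simplicial sets. -/
abbrev SPsh (C : Type u) [SmallCategory C] := Cᵒᵖ ⥤ SSet.{u}

/-- `f : L ⟶ K` is a local acyclic fibration if every boundary-filling lifting problem
`∂Δ[k] → L(U)`, `Δ[k] → K(U)` admits, locally for a covering sieve of `U` in the
topology `J`, a diagonal lift `Δ[k] → L(V)`. -/
def IsLocalAcyclicFibration {C : Type u} [SmallCategory C] (J : GrothendieckTopology C)
    {L K : SPsh C} (f : L ⟶ K) : Prop :=
  ∀ (U : C) (k : ℕ) (a : (∂Δ[k] : SSet.{u}) ⟶ L.obj (op U)) (b : Δ[k] ⟶ K.obj (op U)),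
    a ≫ f.app (op U) = (SSet.boundary.{u} k).ι ≫ b →
    ∃ R ∈ J U, ∀ ⦃V : C⦄ (g : V ⟶ U), R g →
      ∃ ℓ : Δ[k] ⟶ L.obj (op V),
        (SSet.boundary.{u} k).ι ≫ ℓ = a ≫ L.map g.op ∧
        ℓ ≫ f.app (op V) = b ≫ K.map g.op

/-- An `n`-simplex of a simplicial set is degenerate if it is obtained by pulling back a
simplex of strictly smaller dimension; equivalently, if it lies in the image of some
degeneracy operator. -/
def SSet.IsDegenerateSimplex (Q : SSet.{u}) {n : ℕ} (x : Q.obj (op (SimplexCategory.mk n))) : Prop :=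
  ∃ (m : ℕ), m < n ∧ ∃ (f : (⦋n⦌ : SimplexCategory) ⟶ ⦋m⦌) (y : Q.obj (op (SimplexCategory.mk m))), x = Q.map f.op y

/-- A simplicial set has finitely many nondegenerate simplices if the type of all its
nondegenerate simplices (in all dimensions) is finite. -/
def SSet.HasFinitelyManyNondegenerate (Q : SSet.{u}) : Prop :=
  Finite ((n : ℕ) × {x : Q.obj (op (SimplexCategory.mk n)) // ¬ Q.IsDegenerateSimplex x})

namespace LAFAux

lemma app_injective {P Q : SSet.{u}} (i : P ⟶ Q) (hi : Mono i) (m : SimplexCategoryᵒᵖ) :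
    Function.Injective (i.app m) := by
  rw [NatTrans.mono_iff_mono_app] at hi
  exact (mono_iff_injective _).1 (hi m)

lemma range_closed {P Q : SSet.{u}} (i : P ⟶ Q) {m m' : SimplexCategoryᵒᵖ} (ψ : m ⟶ m')
    {z : Q.obj m} (hz : z ∈ Set.range (i.app m)) : Q.map ψ z ∈ Set.range (i.app m') := by
  obtain ⟨p, rfl⟩ := hz
  exact ⟨P.map ψ p, NatTrans.naturality_apply i ψ p⟩

/-- A levelwise injective map of simplicial sets reflects nondegeneracy (i.e. preserves it). -/
lemma not_isDeg_map {B Q : SSet.{u}} (j : B ⟶ Q) (hj : ∀ m, Function.Injective (j.app m))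
    {n : ℕ} (z : B.obj (op ⦋n⦌)) (hz : ¬ B.IsDegenerateSimplex z) :
    ¬ Q.IsDegenerateSimplex (j.app _ z) := by
  rintro ⟨m, hm, f, y, hy⟩
  apply hz
  obtain _ | n := n
  · omega
  have hninj : ¬ Function.Injective f.toOrderHom := by
    intro hinj
    have := Fintype.card_le_of_injective _ hinj
    simp only [len_mk, Fintype.card_fin] at this
    omega
  obtain ⟨idx, f', hf⟩ := eq_σ_comp_of_not_injective f hninj
  refine ⟨n, Nat.lt_succ_self n, σ idx, B.map (δ idx.castSucc).op z, ?_⟩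
  apply hj
  have key : j.app _ z = Q.map (σ idx).op (Q.map f'.op y) := by
    rw [hy, hf, op_comp, FunctorToTypes.map_comp_apply]
  have key2 : Q.map (δ idx.castSucc).op (j.app _ z) = Q.map f'.op y := by
    rw [key, ← FunctorToTypes.map_comp_apply, ← op_comp, δ_comp_σ_self, op_id,
      FunctorToTypes.map_id_apply]
  rw [NatTrans.naturality_apply, NatTrans.naturality_apply, key2]
  exact key

lemma hasFin_of_injective {B Q : SSet.{u}} (j : B ⟶ Q) (hj : ∀ m, Function.Injective (j.app m))
    (hQ : Q.HasFinitelyManyNondegenerate) : B.HasFinitelyManyNondegenerate := by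
  have : Finite ((n : ℕ) × {x : Q.obj (op ⦋n⦌) // ¬ Q.IsDegenerateSimplex x}) := hQ
  refine Finite.of_injective
    (fun s => (⟨s.1, ⟨j.app _ s.2.1, not_isDeg_map j hj s.2.1 s.2.2⟩⟩ :
      (n : ℕ) × {x : Q.obj (op ⦋n⦌) // ¬ Q.IsDegenerateSimplex x})) ?_
  rintro ⟨n, z, hz⟩ ⟨n', z', hz'⟩ h
  obtain rfl : n = n' := congrArg Sigma.fst h
  have h2 := sigma_mk_injective h
  have h3 : j.app _ z = j.app _ z' := congrArg Subtype.val h2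
  obtain rfl := hj _ h3
  rfl

/-- Eilenberg–Zilber, existence part: every simplex is a pullback of a nondegenerate one. -/
lemma exists_core (Q : SSet.{u}) : ∀ (n : ℕ) (z : Q.obj (op ⦋n⦌)),
    ∃ (d : ℕ), d ≤ n ∧ ∃ (φ : (⦋n⦌ : SimplexCategory) ⟶ ⦋d⦌) (w : Q.obj (op ⦋d⦌)),
      ¬ Q.IsDegenerateSimplex w ∧ z = Q.map φ.op w := by
  intro n
  induction n using Nat.strong_induction_on with
  | _ n IH =>
    intro z
    by_cases hd : Q.IsDegenerateSimplex z
    · obtain ⟨m, hm, f, y, rfl⟩ := hd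
      obtain ⟨d, hdm, φ, w, hw, rfl⟩ := IH m hm y
      exact ⟨d, by omega, f ≫ φ, w, hw, by rw [op_comp, FunctorToTypes.map_comp_apply]⟩
    · exact ⟨n, le_refl n, 𝟙 _, z, hd, by simp⟩

/-- A monotone section of a surjective map in the simplex category through a given point. -/
lemma exists_section {m : SimplexCategory} {k : ℕ} (φ : m ⟶ ⦋k⦌)
    (hφ : Function.Surjective φ.toOrderHom) (j : Fin (m.len + 1)) :
    ∃ s : (⦋k⦌ : SimplexCategory) ⟶ m, s ≫ φ = 𝟙 (⦋k⦌ : SimplexCategory) ∧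
      s.toOrderHom (φ.toOrderHom j) = j := by
  classical
  have hsec : ∀ i : Fin (⦋k⦌.len + 1), ∃ a, φ.toOrderHom a = i := fun i => hφ i
  let g : Fin (⦋k⦌.len + 1) → Fin (m.len + 1) :=
    fun i => if i = φ.toOrderHom j then j else (hsec i).choose
  have hg : ∀ i, φ.toOrderHom (g i) = i := by
    intro i
    by_cases h : i = φ.toOrderHom j
    · simp [g, h]
    · simp only [g, if_neg h]
      exact (hsec i).choose_spec
  have hmono : Monotone g := by
    intro i₁ i₂ h12
    rcases eq_or_lt_of_le h12 with rfl | hlt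
    · exact le_refl _
    by_contra hc
    push_neg at hc
    have : i₂ ≤ i₁ := by
      rw [← hg i₂, ← hg i₁]
      exact φ.toOrderHom.monotone hc.le
    omega
  refine ⟨SimplexCategory.Hom.mk ⟨g, hmono⟩, ?_, ?_⟩
  · apply SimplexCategory.Hom.ext
    apply OrderHom.ext
    funext i
    simpa using hg i
  · simp [g]

/-- Eilenberg–Zilber, uniqueness of the epi part. -/
lemma epi_eq_of_map_eq {Q : SSet.{u}} {k : ℕ} {x : Q.obj (op ⦋k⦌)}
    (hx : ¬ Q.IsDegenerateSimplex x) {m : SimplexCategoryᵒᵖ} {φ φ' : m.unop ⟶ ⦋k⦌}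
    (hφ : Function.Surjective φ.toOrderHom) (hφ' : Function.Surjective φ'.toOrderHom)
    (h : Q.map φ.op x = Q.map φ'.op x) : φ = φ' := by
  apply SimplexCategory.Hom.ext
  apply OrderHom.ext
  funext j
  obtain ⟨s, hs, hsj⟩ := exists_section φ hφ j
  have hθ : Q.map (s ≫ φ').op x = x := by
    rw [op_comp, FunctorToTypes.map_comp_apply, ← h, ← FunctorToTypes.map_comp_apply, ← op_comp,
      (hs : s ≫ φ = 𝟙 (⦋k⦌ : SimplexCategory)), op_id, FunctorToTypes.map_id_apply]
  have hinj : Function.Injective (s ≫ φ').toOrderHom := by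
    obtain _ | k := k
    · intro a b _
      ext
      have ha := a.2; have hb := b.2
      simp only [len_mk] at ha hb
      omega
    by_contra hni
    obtain ⟨idx, θ', hcomp⟩ := eq_σ_comp_of_not_injective (s ≫ φ') hni
    exact hx ⟨k, Nat.lt_succ_self k, σ idx, Q.map θ'.op x, by
      conv_lhs => rw [← hθ, hcomp]
      rw [op_comp, FunctorToTypes.map_comp_apply]⟩
  have : (s ≫ φ') = 𝟙 (⦋k⦌ : SimplexCategory) := by
    have : Mono (s ≫ φ') := SimplexCategory.mono_iff_injective.2 hinj
    exact SimplexCategory.eq_id_of_mono _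
  have := congrArg (fun (u : (⦋k⦌ : SimplexCategory) ⟶ ⦋k⦌) => u.toOrderHom (φ.toOrderHom j)) this
  simp only [SimplexCategory.comp_toOrderHom, OrderHom.comp_coe, Function.comp_apply, hsj] at this
  simpa using this.symm

end LAFAux

namespace LAFAux

lemma stdSimplex_deg_iff {k n : ℕ} (x : (Δ[k] : SSet.{u}).obj (op ⦋n⦌)) :
    (Δ[k] : SSet.{u}).IsDegenerateSimplex x ↔ ¬ Function.Injective (SSet.stdSimplex.asOrderHom x) := by
  constructor
  · rintro ⟨m, hm, f, y, rfl⟩ hinj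
    have hninj : ¬ Function.Injective f.toOrderHom := by
      intro hinjf
      have := Fintype.card_le_of_injective _ hinjf
      simp only [len_mk, Fintype.card_fin] at this
      omega
    apply hninj
    intro u v huv
    apply hinj
    show ((Δ[k] : SSet.{u}).map f.op y).down.toOrderHom u =
      ((Δ[k] : SSet.{u}).map f.op y).down.toOrderHom v
    rw [SSet.stdSimplex.map_apply]
    exact congrArg (SSet.stdSimplex.asOrderHom y) huv
  · intro hni
    obtain _ | n := n
    · exact absurd (fun a b _ => by
        ext
        have ha := a.2; have hb := b.2
        simp only [len_mk] at ha hb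
        omega) hni
    obtain ⟨idx, θ', hθ⟩ := eq_σ_comp_of_not_injective (x.down) hni
    refine ⟨n, Nat.lt_succ_self n, σ idx, SSet.stdSimplex.objEquiv.symm θ', ?_⟩
    rw [SSet.stdSimplex.map_apply]
    show x = SSet.stdSimplex.objEquiv.symm (σ idx ≫ θ')
    rw [← hθ]
    rfl

lemma stdSimplex_finite (k : ℕ) : (Δ[k] : SSet.{u}).HasFinitelyManyNondegenerate := by
  have hinj : ∀ (s : (n : ℕ) × {x : (Δ[k] : SSet.{u}).obj (op ⦋n⦌) //
      ¬ (Δ[k] : SSet.{u}).IsDegenerateSimplex x}), Function.Injective (SSet.stdSimplex.asOrderHom s.2.1) :=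
    fun s => not_not.1 (fun h => s.2.2 ((stdSimplex_deg_iff _).2 h))
  have hle : ∀ (s : (n : ℕ) × {x : (Δ[k] : SSet.{u}).obj (op ⦋n⦌) //
      ¬ (Δ[k] : SSet.{u}).IsDegenerateSimplex x}), s.1 < k + 1 := by
    intro s
    have := Fintype.card_le_of_injective _ (hinj s)
    simp only [len_mk, Fintype.card_fin] at this
    omega
  refine Finite.of_injective (β := (n : Fin (k + 1)) × (Fin (n.1 + 1) → Fin (k + 1)))
    (fun s => ⟨⟨s.1, hle s⟩, fun j => SSet.stdSimplex.asOrderHom s.2.1 j⟩) ?_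
  rintro ⟨n, x, hx⟩ ⟨n', x', hx'⟩ h
  obtain rfl : n = n' := by
    have := congrArg (fun (t : (n : Fin (k + 1)) × (Fin (n.1 + 1) → Fin (k + 1))) => t.1.1) h
    simpa using this
  have h2 := sigma_mk_injective h
  have h3 : SSet.stdSimplex.asOrderHom x = SSet.stdSimplex.asOrderHom x' := by
    apply OrderHom.ext
    funext j
    exact congrFun h2 j
  obtain rfl : x = x' := by
    apply ULift.ext
    exact SimplexCategory.Hom.ext _ _ h3
  rfl

lemma boundaryInclusion_app_injective (k : ℕ) (m : SimplexCategoryᵒᵖ) :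
    Function.Injective (((SSet.boundary.{u} k).ι).app m) :=
  fun _ _ h => Subtype.ext h

instance boundaryInclusion_mono (k : ℕ) : Mono ((SSet.boundary.{u} k).ι) := by
  have : ∀ m, Mono (((SSet.boundary.{u} k).ι).app m) :=
    fun m => (mono_iff_injective _).2 (boundaryInclusion_app_injective k m)
  exact NatTrans.mono_of_mono_app _

lemma boundary_finite (k : ℕ) : (∂Δ[k] : SSet.{u}).HasFinitelyManyNondegenerate :=
  hasFin_of_injective _ (boundaryInclusion_app_injective k) (stdSimplex_finite k)

end LAFAux

namespace LAFAux

open CategoryTheory.GrothendieckTopology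

lemma key {C : Type u} [SmallCategory C] (J : GrothendieckTopology C)
    {L K : SPsh C} (f : L ⟶ K) (hf : IsLocalAcyclicFibration J f) (N : ℕ) :
    ∀ (P Q : SSet.{u}) (i : P ⟶ Q),
      (∀ m, Function.Injective (i.app m)) →
      Q.HasFinitelyManyNondegenerate →
      Set.ncard (setOf fun s : (n : ℕ) × {x : Q.obj (op ⦋n⦌) // ¬ Q.IsDegenerateSimplex x} =>
        s.2.1 ∉ Set.range (i.app (op (SimplexCategory.mk s.1)))) ≤ N →
      ∀ (U : C) (a : P ⟶ L.obj (op U)) (b : Q ⟶ K.obj (op U)),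
        a ≫ f.app (op U) = i ≫ b →
        ∃ R ∈ J U, ∀ ⦃V : C⦄ (g : V ⟶ U), R g →
          ∃ ℓ : Q ⟶ L.obj (op V), i ≫ ℓ = a ≫ L.map g.op ∧
            ℓ ≫ f.app (op V) = b ≫ K.map g.op := by
  classical
  induction N using Nat.strong_induction_on with
  | _ N IH =>
  intro P Q i hi hQ hcard U a b hab
  haveI hQfin : Finite ((n : ℕ) × {x : Q.obj (op ⦋n⦌) // ¬ Q.IsDegenerateSimplex x}) := hQ
  by_cases hex : ∃ n : ℕ, ∃ x : Q.obj (op ⦋n⦌),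
      ¬ Q.IsDegenerateSimplex x ∧ x ∉ Set.range (i.app (op ⦋n⦌))
  case neg =>
    push_neg at hex
    have hsurj : ∀ m, Function.Surjective (i.app m) := by
      intro m
      induction m using Opposite.rec with
      | op X =>
      induction X using SimplexCategory.rec with
      | mk n =>
      intro z
      obtain ⟨d, hd, φ, w, hw, rfl⟩ := exists_core Q n z
      obtain ⟨p, hp⟩ := hex d w hw
      exact ⟨P.map φ.op p, by rw [NatTrans.naturality_apply, hp]⟩
    have : ∀ m, IsIso (i.app m) := fun m => (isIso_iff_bijective _).2 ⟨hi m, hsurj m⟩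
    have hiso : IsIso i := NatIso.isIso_of_isIso_app i
    refine ⟨⊤, J.top_mem U, ?_⟩
    intro V g _
    refine ⟨inv i ≫ a ≫ L.map g.op, ?_, ?_⟩
    · rw [← Category.assoc, ← Category.assoc, IsIso.hom_inv_id, Category.id_comp]
    · have h1 : a ≫ L.map g.op ≫ f.app (op V) = i ≫ b ≫ K.map g.op := by
        rw [f.naturality g.op, ← Category.assoc, hab, Category.assoc]
      rw [Category.assoc, Category.assoc, h1, IsIso.inv_hom_id_assoc]
  case pos =>
    obtain ⟨k, hkspec, hkmin⟩ :
        ∃ k, (∃ x : Q.obj (op ⦋k⦌), ¬ Q.IsDegenerateSimplex x ∧ x ∉ Set.range (i.app (op ⦋k⦌))) ∧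
          ∀ d, d < k → ¬ (∃ x : Q.obj (op ⦋d⦌), ¬ Q.IsDegenerateSimplex x ∧
            x ∉ Set.range (i.app (op ⦋d⦌))) :=
      ⟨Nat.find hex, Nat.find_spec hex, fun d hd => Nat.find_min hex hd⟩
    obtain ⟨x, hxnd, hxr⟩ := hkspec
    have hmin : ∀ d, d < k → ∀ w : Q.obj (op ⦋d⦌), ¬ Q.IsDegenerateSimplex w →
        w ∈ Set.range (i.app (op ⦋d⦌)) := by
      intro d hd w hw
      by_contra hcon
      exact hkmin d hd ⟨w, hw, hcon⟩
    have hlow : ∀ (d : ℕ), d < k → ∀ z : Q.obj (op ⦋d⦌), z ∈ Set.range (i.app (op ⦋d⦌)) := by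
      intro d hd z
      obtain ⟨d', hd', φ, w, hw, rfl⟩ := exists_core Q d z
      obtain ⟨p, hp⟩ := hmin d' (lt_of_le_of_lt hd' hd) w hw
      exact ⟨P.map φ.op p, by rw [NatTrans.naturality_apply, hp]⟩
    -- F1 : nonsurjective pullbacks of x are in the image of i
    have F1 : ∀ (m : SimplexCategoryᵒᵖ) (g : m.unop ⟶ ⦋k⦌), ¬ Function.Surjective g.toOrderHom →
        Q.map g.op x ∈ Set.range (i.app m) := by
      intro m g hg
      by_cases hk0 : k = 0
      · exfalso
        apply hg
        intro t
        refine ⟨⟨0, Nat.succ_pos _⟩, ?_⟩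
        ext
        have h1 := (g.toOrderHom ⟨0, Nat.succ_pos _⟩).2
        have h2 := t.2
        subst hk0
        simp only [len_mk] at h1 h2
        omega
      · obtain ⟨k₀, rfl⟩ := Nat.exists_eq_succ_of_ne_zero hk0
        obtain ⟨j, g', hgg⟩ := eq_comp_δ_of_not_surjective g hg
        rw [hgg, op_comp, FunctorToTypes.map_comp_apply]
        exact range_closed i g'.op (hlow k₀ (Nat.lt_succ_self k₀) _)
    -- F2 : surjective pullbacks of x are not in the image of i
    have F2 : ∀ (m : SimplexCategoryᵒᵖ) (g : m.unop ⟶ ⦋k⦌), Function.Surjective g.toOrderHom →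
        Q.map g.op x ∉ Set.range (i.app m) := by
      intro m g hg hmem
      obtain ⟨s, hs, -⟩ := exists_section g hg ⟨0, Nat.succ_pos _⟩
      apply hxr
      have hx' : x = Q.map s.op (Q.map g.op x) := by
        rw [← FunctorToTypes.map_comp_apply, ← op_comp, hs, op_id, FunctorToTypes.map_id_apply]
      rw [hx']
      exact range_closed i s.op hmem
    -- the subpresheaf generated by the image of `i` and `x`
    let A : Subfunctor Q :=
      { obj := fun m => {z | z ∈ Set.range (i.app m) ∨ ∃ g : m.unop ⟶ ⦋k⦌, z = Q.map g.op x}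
        map := by
          intro m m' ψ z hz
          cases hz with
          | inl h => exact Or.inl (range_closed i ψ h)
          | inr h =>
            obtain ⟨g, rfl⟩ := h
            refine Or.inr ⟨ψ.unop ≫ g, ?_⟩
            rw [op_comp, Quiver.Hom.op_unop, FunctorToTypes.map_comp_apply] }
    -- the characteristic map of x
    let χ : (Δ[k] : SSet.{u}) ⟶ Q :=
      { app := fun m => ↾fun u => Q.map (u.down).op x
        naturality := by
          intro m m' ψ
          ext u
          show Q.map (ψ.unop ≫ u.down).op x = Q.map ψ (Q.map u.down.op x)
          rw [op_comp, Quiver.Hom.op_unop, FunctorToTypes.map_comp_apply] }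
    have hbd : ∀ (m : SimplexCategoryᵒᵖ) (w : (∂Δ[k] : SSet.{u}).obj m),
        Q.map (w.1.down).op x ∈ Set.range (i.app m) := fun m w => F1 m w.1.down w.2
    -- the boundary of x, viewed in P
    let e : (∂Δ[k] : SSet.{u}) ⟶ P :=
      { app := fun m => ↾fun w => (hbd m w).choose
        naturality := by
          intro m m' ψ
          ext w
          show (hbd m' ((∂Δ[k] : SSet.{u}).map ψ w)).choose = P.map ψ ((hbd m w).choose)
          apply hi m'
          rw [(hbd m' _).choose_spec, NatTrans.naturality_apply i ψ, (hbd m w).choose_spec]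
          show Q.map (ψ.unop ≫ w.1.down).op x = Q.map ψ (Q.map (w.1.down).op x)
          rw [op_comp, Quiver.Hom.op_unop, FunctorToTypes.map_comp_apply] }
    have he : ∀ (m) (w : (∂Δ[k] : SSet.{u}).obj m),
        i.app m (e.app m w) = Q.map (w.1.down).op x := fun m w => (hbd m w).choose_spec
    have heχ : e ≫ i = (SSet.boundary.{u} k).ι ≫ χ := by
      apply SSet.hom_ext
      intro m
      ext w
      show i.app m (e.app m w) = χ.app m w.1
      rw [he]
      rfl
    have hsq : (e ≫ a) ≫ f.app (op U) = (SSet.boundary.{u} k).ι ≫ (χ ≫ b) := by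
      rw [Category.assoc, hab, ← Category.assoc, ← Category.assoc, heχ]
    obtain ⟨R₁, hR₁, hlift⟩ := hf U k (e ≫ a) (χ ≫ b) hsq
    let i₁ : P ⟶ A.toFunctor := Subfunctor.lift i (G := A) (by rintro m _ ⟨p, rfl⟩; exact Or.inl ⟨p, rfl⟩)
    have hi₁ι : i₁ ≫ A.ι = i := Subfunctor.lift_ι _ _
    have hA_inj : ∀ m, Function.Injective (A.ι.app m) := fun m u v h => Subtype.ext h
    have hQA : SSet.HasFinitelyManyNondegenerate A.toFunctor := hasFin_of_injective A.ι hA_inj hQ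
    have hrangeι : ∀ m, Set.range (A.ι.app m) = A.obj m := fun m => Subtype.range_val
    -- the measure decreases
    have hssub : setOf (fun s : (n : ℕ) × {x' : Q.obj (op ⦋n⦌) // ¬ Q.IsDegenerateSimplex x'} =>
          s.2.1 ∉ Set.range (A.ι.app (op (SimplexCategory.mk s.1)))) ⊂
        setOf (fun s : (n : ℕ) × {x' : Q.obj (op ⦋n⦌) // ¬ Q.IsDegenerateSimplex x'} =>
          s.2.1 ∉ Set.range (i.app (op (SimplexCategory.mk s.1)))) := by
      constructor
      · intro s hs hmem
        apply hs
        show s.2.1 ∈ Set.range (A.ι.app (op (SimplexCategory.mk s.1)))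
        rw [hrangeι]
        exact Or.inl hmem
      · intro hcon
        have hx_in : (⟨k, ⟨x, hxnd⟩⟩ : (n : ℕ) × {x' : Q.obj (op ⦋n⦌) //
            ¬ Q.IsDegenerateSimplex x'}) ∈
            setOf (fun s : (n : ℕ) × {x' : Q.obj (op ⦋n⦌) // ¬ Q.IsDegenerateSimplex x'} =>
              s.2.1 ∉ Set.range (i.app (op (SimplexCategory.mk s.1)))) := hxr
        apply hcon hx_in
        show x ∈ Set.range (A.ι.app (op ⦋k⦌))
        rw [hrangeι]
        exact Or.inr ⟨𝟙 _, by rw [op_id, FunctorToTypes.map_id_apply]⟩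
    have hlt : Set.ncard (setOf fun s : (n : ℕ) × {x' : Q.obj (op ⦋n⦌) // ¬ Q.IsDegenerateSimplex x'} =>
        s.2.1 ∉ Set.range (A.ι.app (op (SimplexCategory.mk s.1)))) < N :=
      lt_of_lt_of_le (Set.ncard_lt_ncard hssub (Set.toFinite _)) hcard
    have main : ∀ (V : C) (g : V ⟶ U), R₁ g →
        ∃ R' ∈ J V, ∀ ⦃W : C⦄ (h : W ⟶ V), R' h →
          ∃ ℓ' : Q ⟶ L.obj (op W), i ≫ ℓ' = a ≫ L.map (h ≫ g).op ∧
            ℓ' ≫ f.app (op W) = b ≫ K.map (h ≫ g).op := by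
      intro V g hg
      obtain ⟨ℓ, hℓ1, hℓ2⟩ := hlift g hg
      set aL : P ⟶ L.obj (op V) := a ≫ L.map g.op with haL
      have hre : ∀ (m : SimplexCategoryᵒᵖ) (z : A.toFunctor.obj m),
          z.1 ∉ Set.range (i.app m) → ∃ g' : m.unop ⟶ ⦋k⦌, z.1 = Q.map g'.op x :=
        fun m z hr => z.2.resolve_left hr
      let lfun : ∀ (m : SimplexCategoryᵒᵖ), A.toFunctor.obj m → (L.obj (op V)).obj m :=
        fun m z =>
          if h : z.1 ∈ Set.range (i.app m) then aL.app m h.choose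
          else ℓ.app m (ULift.up (hre m z h).choose)
      have hsurj_of : ∀ (m : SimplexCategoryᵒᵖ) (z : A.toFunctor.obj m)
          (θ : m.unop ⟶ ⦋k⦌), z.1 ∉ Set.range (i.app m) → z.1 = Q.map θ.op x →
          Function.Surjective θ.toOrderHom := by
        intro m z θ hr hθ
        by_contra hns
        exact hr (hθ ▸ F1 m θ hns)
      have hval1 : ∀ (m) (z : A.toFunctor.obj m) (p : P.obj m), i.app m p = z.1 →
          lfun m z = aL.app m p := by
        intro m z p hp
        have hr : z.1 ∈ Set.range (i.app m) := ⟨p, hp⟩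
        simp only [lfun, dif_pos hr]
        exact congrArg (aL.app m) (hi m (hr.choose_spec.trans hp.symm))
      have hval2 : ∀ (m) (z : A.toFunctor.obj m) (φ : m.unop ⟶ ⦋k⦌),
          z.1 ∉ Set.range (i.app m) → z.1 = Q.map φ.op x →
          lfun m z = ℓ.app m (ULift.up φ) := by
        intro m z φ hr hzφ
        simp only [lfun, dif_neg hr]
        exact congrArg (fun t => ℓ.app m (ULift.up t))
          (epi_eq_of_map_eq hxnd (hsurj_of m z _ hr (hre m z hr).choose_spec)
            (hsurj_of m z φ hr hzφ) (by rw [← (hre m z hr).choose_spec, ← hzφ]))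
      have hnat : ∀ (m m' : SimplexCategoryᵒᵖ) (ψ : m ⟶ m') (z : A.toFunctor.obj m),
          lfun m' (A.toFunctor.map ψ z) = (L.obj (op V)).map ψ (lfun m z) := by
        intro m m' ψ z
        have hz1 : (A.toFunctor.map ψ z).1 = Q.map ψ z.1 := rfl
        by_cases hr : z.1 ∈ Set.range (i.app m)
        · obtain ⟨p, hp⟩ := hr
          rw [hval1 m z p hp]
          have hp' : i.app m' (P.map ψ p) = (A.toFunctor.map ψ z).1 := by
            rw [hz1, ← hp, NatTrans.naturality_apply]
          rw [hval1 m' _ (P.map ψ p) hp']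
          exact NatTrans.naturality_apply aL ψ p
        · have hzφ := (hre m z hr).choose_spec
          set φc := (hre m z hr).choose with hφcdef
          rw [hval2 m z φc hr hzφ]
          have hcomp : (A.toFunctor.map ψ z).1 = Q.map (ψ.unop ≫ φc).op x := by
            rw [hz1, hzφ, op_comp, Quiver.Hom.op_unop, FunctorToTypes.map_comp_apply]
          by_cases hr' : (A.toFunctor.map ψ z).1 ∈ Set.range (i.app m')
          · have hns : ¬ Function.Surjective (ψ.unop ≫ φc).toOrderHom := by
              intro hsurj
              exact F2 m' (ψ.unop ≫ φc) hsurj (hcomp ▸ hr')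
            have hiw : i.app m' (e.app m' ⟨ULift.up (ψ.unop ≫ φc), hns⟩) =
                (A.toFunctor.map ψ z).1 := by
              rw [he m' ⟨ULift.up (ψ.unop ≫ φc), hns⟩, hcomp]
            rw [hval1 m' _ _ hiw]
            have h1 : (L.obj (op V)).map ψ (ℓ.app m (ULift.up φc)) =
                ℓ.app m' (ULift.up (ψ.unop ≫ φc)) :=
              (NatTrans.naturality_apply ℓ ψ _).symm
            rw [h1]
            exact (ConcreteCategory.congr_hom (NatTrans.congr_app hℓ1 m') ⟨ULift.up (ψ.unop ≫ φc), hns⟩).symm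
          · have hsurj' : Function.Surjective (ψ.unop ≫ φc).toOrderHom := by
              by_contra hns
              exact hr' (hcomp ▸ F1 m' (ψ.unop ≫ φc) hns)
            rw [hval2 m' _ (ψ.unop ≫ φc) hr' hcomp]
            exact NatTrans.naturality_apply ℓ ψ (SSet.stdSimplex.objEquiv.symm φc)
      let ℓA : A.toFunctor ⟶ L.obj (op V) :=
        { app := fun m => ↾(lfun m)
          naturality := by
            intro m m' ψ
            ext z
            exact hnat m m' ψ z }
      have c1 : i₁ ≫ ℓA = a ≫ L.map g.op := by
        apply SSet.hom_ext
        intro m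
        ext p
        exact hval1 m (i₁.app m p) p rfl
      have c2 : ℓA ≫ f.app (op V) = A.ι ≫ (b ≫ K.map g.op) := by
        apply SSet.hom_ext
        intro m
        ext z
        show (f.app (op V)).app m (lfun m z) = (K.map g.op).app m (b.app m z.1)
        by_cases hr : z.1 ∈ Set.range (i.app m)
        · obtain ⟨p, hp⟩ := hr
          rw [hval1 m z p hp]
          calc (f.app (op V)).app m (aL.app m p)
              = (K.map g.op).app m ((f.app (op U)).app m (a.app m p)) :=
                ConcreteCategory.congr_hom (NatTrans.congr_app (f.naturality g.op) m) (a.app m p)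
            _ = (K.map g.op).app m (b.app m (i.app m p)) := by
                rw [show (f.app (op U)).app m (a.app m p) = b.app m (i.app m p) from
                  ConcreteCategory.congr_hom (NatTrans.congr_app hab m) p]
            _ = (K.map g.op).app m (b.app m z.1) := by rw [hp]
        · have hzφ := (hre m z hr).choose_spec
          rw [hval2 m z _ hr hzφ]
          calc (f.app (op V)).app m (ℓ.app m (ULift.up (hre m z hr).choose))
              = (K.map g.op).app m (b.app m (Q.map ((hre m z hr).choose).op x)) :=
                ConcreteCategory.congr_hom (NatTrans.congr_app hℓ2 m) _
            _ = (K.map g.op).app m (b.app m z.1) := by rw [← hzφ]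
      obtain ⟨R', hR', hL⟩ := IH _ hlt A.toFunctor Q A.ι hA_inj hQ le_rfl V ℓA
        (b ≫ K.map g.op) c2
      refine ⟨R', hR', ?_⟩
      intro W h hh
      obtain ⟨ℓ', d1, d2⟩ := hL h hh
      refine ⟨ℓ', ?_, ?_⟩
      · rw [← hi₁ι, Category.assoc, d1, ← Category.assoc, c1, Category.assoc,
          ← Functor.map_comp, ← op_comp]
      · rw [d2, Category.assoc, ← Functor.map_comp, ← op_comp]
    choose Rfun hmem hprop using main
    refine ⟨Sieve.bind R₁.arrows (fun Y f' hf' => Rfun Y f' hf'),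
      J.bind_covering hR₁ (fun Y f' hf' => hmem Y f' hf'), ?_⟩
    intro W h' hh'
    obtain ⟨Y, h₁, g₁, hg₁, hh₁, rfl⟩ := hh'
    exact hprop Y g₁ hg₁ h₁ hh₁

end LAFAux


/-- A morphism of simplicial presheaves is a local acyclic fibration if and only if it has
the local right lifting property with respect to all inclusions `P ↪ Q` of simplicial sets
having only finitely many nondegenerate simplices. -/
theorem isLocalAcyclicFibration_iff_local_lifting_finite_inclusions
    {C : Type u} [SmallCategory C] (J : GrothendieckTopology C)
    {L K : SPsh C} (f : L ⟶ K) :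
    IsLocalAcyclicFibration J f ↔
      ∀ (P Q : SSet.{u}) (i : P ⟶ Q), Mono i →
        P.HasFinitelyManyNondegenerate → Q.HasFinitelyManyNondegenerate →
        ∀ (U : C) (a : P ⟶ L.obj (op U)) (b : Q ⟶ K.obj (op U)),
          a ≫ f.app (op U) = i ≫ b →
          ∃ R ∈ J U, ∀ ⦃V : C⦄ (g : V ⟶ U), R g →
            ∃ ℓ : Q ⟶ L.obj (op V),
              i ≫ ℓ = a ≫ L.map g.op ∧
              ℓ ≫ f.app (op V) = b ≫ K.map g.op := by
  constructor
  · intro hf P Q i imono hP hQ U a b hab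
    exact LAFAux.key J f hf _ P Q i (fun m => LAFAux.app_injective i imono m) hQ le_rfl U a b hab
  · intro H U k a b hab
    exact H _ _ ((SSet.boundary.{u} k).ι) (LAFAux.boundaryInclusion_mono k)
      (LAFAux.boundary_finite k) (LAFAux.stdSimplex_finite k) U a b hab
end

section
/- Let X_• be a simplicial presheaf on a site C, let e : K_• → X_• be a local acyclic fibration, let M be an object of C with associated representable presheaf h_M, let n ≥ 0, and let u : h_M → K_n be a covering morphism of presheaves. Then there exist a local acyclic fibration L_• → X_• and a morphism f : L_• → K_• over X_• whose degree-n component factors as L_n → h_M → K_n with second map u. -/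
universe u

open CategoryTheory Simplicial Opposite

/-- A morphism of presheaves of sets is a covering morphism if the induced morphism of
associated sheaves is an epimorphism. -/
def IsCoveringMorphism {C : Type u} [SmallCategory C] (J : GrothendieckTopology C)
    {A B : Cᵒᵖ ⥤ Type u} (u : A ⟶ B) : Prop :=
  Epi ((presheafToSheaf J (Type u)).map u)

/-- The functor taking a simplicial presheaf to its presheaf of `n`-simplices. -/
def evalDegree (C : Type u) [SmallCategory C] (n : ℕ) : SPsh C ⥤ (Cᵒᵖ ⥤ Type u) :=
  (Functor.whiskeringRight Cᵒᵖ SSet.{u} (Type u)).obj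
    ((evaluation SimplexCategoryᵒᵖ (Type u)).obj (op (SimplexCategory.mk n)))

lemma exists_inf_sieve {C : Type u} [SmallCategory C] (J : GrothendieckTopology C) {V : C}
    {ι : Type*} [Finite ι] (S : ι → Sieve V) (h : ∀ i, S i ∈ J V) :
    ∃ T ∈ J V, ∀ (i : ι) ⦃W : C⦄ (f : W ⟶ V), T.arrows f → (S i).arrows f := by
  cases nonempty_fintype ι
  classical
  have hT : ∀ s : Finset ι, s.inf S ∈ J V := by
    intro s
    induction s using Finset.induction with
    | empty => simpa using J.top_mem V
    | insert _ _ hx ih => rw [Finset.inf_insert]; exact J.intersection_covering (h _) ih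
  refine ⟨Finset.univ.inf S, hT _, fun i W f hf => ?_⟩
  exact (Finset.inf_le (Finset.mem_univ i) : Finset.univ.inf S ≤ S i) _ hf

instance (a b : SimplexCategory) : Finite (a ⟶ b) :=
  Finite.of_injective (fun φ => (φ.toOrderHom : Fin _ → Fin _))
    (fun _ _ h => SimplexCategory.Hom.ext _ _ (OrderHom.ext _ _ h))

section
variable {C : Type u} [SmallCategory C] {K : SPsh C} {M : C} {n : ℕ}
variable (u : yoneda.obj M ⟶ (evalDegree C n).obj K)

def LElt (U : Cᵒᵖ) (m : SimplexCategoryᵒᵖ) : Type u :=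
  { p : (K.obj U).obj m × ((SimplexCategory.mk n ⟶ m.unop) → (U.unop ⟶ M)) //
    ∀ α, u.app U (p.2 α) = (K.obj U).map α.op p.1 }

/-- the simplicial set of sections of `L` over `U` -/
def LObj (U : Cᵒᵖ) : SSet.{u} where
  obj m := LElt u U m
  map {m m'} φ := TypeCat.ofHom fun p => ⟨((K.obj U).map φ p.1.1, fun α => p.1.2 (α ≫ φ.unop)), by
    intro α
    rw [p.2 (α ≫ φ.unop)]
    rw [op_comp, Quiver.Hom.op_unop, FunctorToTypes.map_comp_apply]⟩
  map_id m := by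
    refine ConcreteCategory.hom_ext _ _ fun p => ?_
    apply Subtype.ext
    refine Prod.ext (by simp; rfl) (funext fun α => ?_)
    simp; rfl
  map_comp {m m' m''} φ φ' := by
    refine ConcreteCategory.hom_ext _ _ fun p => ?_
    apply Subtype.ext
    refine Prod.ext (by simp; rfl) (funext fun α => ?_)
    simp; rfl

/-- the simplicial presheaf `L` -/
def LFun : SPsh C where
  obj U := LObj u U
  map {U U'} g :=
    { app := fun m => TypeCat.ofHom fun p => ⟨((K.map g).app m p.1.1, fun α => (yoneda.obj M).map g (p.1.2 α)), by
        intro α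
        rw [NatTrans.naturality_apply u g]
        show (K.map g).app _ (u.app U (p.1.2 α)) = _
        rw [p.2 α, NatTrans.naturality_apply]⟩
      naturality := fun m m' φ => by
        refine ConcreteCategory.hom_ext _ _ fun p => ?_
        apply Subtype.ext
        apply Prod.ext
        · show (K.map g).app m' ((K.obj U).map φ p.1.1) = (K.obj U').map φ ((K.map g).app m p.1.1)
          exact NatTrans.naturality_apply (K.map g) φ p.1.1
        · rfl }
  map_id U := by
    apply NatTrans.ext
    funext m
    refine ConcreteCategory.hom_ext _ _ fun p => ?_
    apply Subtype.ext
    apply Prod.ext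
    · show (K.map (𝟙 U)).app m p.1.1 = p.1.1
      rw [K.map_id]
      rfl
    · funext α
      show (yoneda.obj M).map (𝟙 U) (p.1.2 α) = p.1.2 α
      simp
  map_comp {U U' U''} g g' := by
    apply NatTrans.ext
    funext m
    refine ConcreteCategory.hom_ext _ _ fun p => ?_
    apply Subtype.ext
    apply Prod.ext
    · show (K.map (g ≫ g')).app m p.1.1 = (K.map g').app m ((K.map g).app m p.1.1)
      rw [K.map_comp]
      rfl
    · funext α
      show (yoneda.obj M).map (g ≫ g') (p.1.2 α)
        = (yoneda.obj M).map g' ((yoneda.obj M).map g (p.1.2 α))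
      simp

/-- the projection `L ⟶ K` -/
def fMor : LFun u ⟶ K where
  app U := { app := fun m => TypeCat.ofHom fun p => p.1.1 }

/-- the degree-`n` map to the representable presheaf -/
def ψMor : (evalDegree C n).obj (LFun u) ⟶ yoneda.obj M where
  app U := TypeCat.ofHom fun p => p.1.2 (𝟙 _)

lemma fact : (evalDegree C n).map (fMor u) = ψMor u ≫ u := by
  ext U p
  show p.1.1 = u.app U (p.1.2 (𝟙 _))
  rw [p.2 (𝟙 _)]
  simp


lemma not_surj_map {k : ℕ} {m m' : SimplexCategoryᵒᵖ} (σ : (Δ[k] : SSet.{u}).obj m)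
    (h : ¬Function.Surjective (SSet.stdSimplex.asOrderHom σ)) (φ : m ⟶ m') :
    ¬Function.Surjective (SSet.stdSimplex.asOrderHom ((Δ[k] : SSet.{u}).map φ σ)) := by
  intro hs
  apply h
  have hc : ⇑(SSet.stdSimplex.asOrderHom ((Δ[k] : SSet.{u}).map φ σ))
      = ⇑(SSet.stdSimplex.asOrderHom σ) ∘ ⇑(φ.unop.toOrderHom) := rfl
  rw [hc] at hs
  exact hs.of_comp

section LiftConstruction

variable {U V W : C} (g : V ⟶ U) (h' : W ⟶ V) {k : ℕ}
  (a : (∂Δ[k] : SSet.{u}) ⟶ (LFun u).obj (op U))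
  (ℓ : Δ[k] ⟶ K.obj (op V))
  (t : (SimplexCategory.mk n ⟶ SimplexCategory.mk k) → (W ⟶ M))

/-- the lift data in degree `n` -/
noncomputable def mdata : Δ[k].obj (op (SimplexCategory.mk n)) → (W ⟶ M) := fun β =>
  if h : Function.Surjective (SSet.stdSimplex.asOrderHom β) then t β.down
  else (h' ≫ g) ≫ ((a.app (op (SimplexCategory.mk n)) ⟨β, h⟩).1.2 (𝟙 _))

lemma key (hℓ : (SSet.boundary.{u} k).ι ≫ ℓ = (a ≫ (fMor u).app (op U)) ≫ K.map g.op)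
    (ht : ∀ β, u.app (op W) (t β)
      = (K.map h'.op).app (op (SimplexCategory.mk n)) (ℓ.app _ (ULift.up β)))
    (β : Δ[k].obj (op (SimplexCategory.mk n))) :
    u.app (op W) (mdata u g h' a t β)
      = (K.map h'.op).app (op (SimplexCategory.mk n)) (ℓ.app _ β) := by
  rw [mdata]
  by_cases h : Function.Surjective (SSet.stdSimplex.asOrderHom β)
  · rw [dif_pos h, ht β.down]
    rfl
  · rw [dif_neg h]
    set p := a.app (op (SimplexCategory.mk n)) ⟨β, h⟩ with hp
    have h1 : (h' ≫ g) ≫ (p.1.2 (𝟙 _)) = (yoneda.obj M).map (h' ≫ g).op (p.1.2 (𝟙 _)) := rfl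
    rw [h1, NatTrans.naturality_apply u (h' ≫ g).op]
    have h2 : u.app (op U) (p.1.2 (𝟙 _)) = p.1.1 := by
      rw [p.2 (𝟙 _)]
      show (K.obj (op U)).map (𝟙 _) p.1.1 = p.1.1
      simp
    rw [h2]
    have h4 : ℓ.app (op (SimplexCategory.mk n)) β
        = (K.map g.op).app (op (SimplexCategory.mk n)) p.1.1 :=
      ConcreteCategory.congr_hom (NatTrans.congr_app hℓ (op (SimplexCategory.mk n))) ⟨β, h⟩
    show (K.map (h' ≫ g).op).app _ p.1.1 = (K.map h'.op).app _ (ℓ.app _ β)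
    rw [h4, op_comp, K.map_comp]
    rfl

/-- the lift `Δ[k] ⟶ L(W)` -/
noncomputable def liftL
    (hℓ : (SSet.boundary.{u} k).ι ≫ ℓ = (a ≫ (fMor u).app (op U)) ≫ K.map g.op)
    (ht : ∀ β, u.app (op W) (t β)
      = (K.map h'.op).app (op (SimplexCategory.mk n)) (ℓ.app _ (ULift.up β))) :
    Δ[k] ⟶ (LFun u).obj (op W) where
  app m := TypeCat.ofHom fun σ =>
    ⟨((ℓ ≫ K.map h'.op).app m σ,
      fun α => mdata u g h' a t ((Δ[k] : SSet.{u}).map α.op σ)), by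
      intro α
      show u.app (op W) (mdata u g h' a t ((Δ[k] : SSet.{u}).map α.op σ)) = _
      rw [key u g h' a ℓ t hℓ ht ((Δ[k] : SSet.{u}).map α.op σ)]
      exact NatTrans.naturality_apply (ℓ ≫ K.map h'.op) α.op σ⟩
  naturality {m m'} φ := by
    refine ConcreteCategory.hom_ext _ _ fun σ => ?_
    apply Subtype.ext
    apply Prod.ext
    · exact NatTrans.naturality_apply (ℓ ≫ K.map h'.op) φ σ
    · funext α
      show mdata u g h' a t ((Δ[k] : SSet.{u}).map α.op ((Δ[k] : SSet.{u}).map φ σ))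
        = mdata u g h' a t ((Δ[k] : SSet.{u}).map (α ≫ φ.unop).op σ)
      have harr : (α ≫ φ.unop).op = φ ≫ α.op := by rw [op_comp]; rfl
      rw [harr, FunctorToTypes.map_comp_apply]

lemma liftL_boundary
    (hℓ : (SSet.boundary.{u} k).ι ≫ ℓ = (a ≫ (fMor u).app (op U)) ≫ K.map g.op)
    (ht : ∀ β, u.app (op W) (t β)
      = (K.map h'.op).app (op (SimplexCategory.mk n)) (ℓ.app _ (ULift.up β))) :
    (SSet.boundary.{u} k).ι ≫ liftL u g h' a ℓ t hℓ ht
      = a ≫ (LFun u).map (h' ≫ g).op := by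
  apply NatTrans.ext
  funext m
  refine ConcreteCategory.hom_ext _ _ fun σ => ?_
  apply Subtype.ext
  apply Prod.ext
  · show (K.map h'.op).app m (ℓ.app m σ.1) = (K.map (h' ≫ g).op).app m ((a.app m σ).1.1)
    have h4 : ℓ.app m σ.1 = (K.map g.op).app m ((a.app m σ).1.1) :=
      ConcreteCategory.congr_hom (NatTrans.congr_app hℓ m) σ
    rw [h4, op_comp, K.map_comp]
    rfl
  · funext α
    have hβ : ¬Function.Surjective
        (SSet.stdSimplex.asOrderHom ((Δ[k] : SSet.{u}).map α.op σ.1)) :=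
      not_surj_map σ.1 σ.2 α.op
    show mdata u g h' a t ((Δ[k] : SSet.{u}).map α.op σ.1)
      = (h' ≫ g) ≫ ((a.app m σ).1.2 α)
    rw [mdata, dif_neg hβ]
    congr 1
    have h5 : (⟨(Δ[k] : SSet.{u}).map α.op σ.1, hβ⟩
          : (∂Δ[k] : SSet.{u}).obj (op (SimplexCategory.mk n)))
        = (∂Δ[k] : SSet.{u}).map α.op σ := Subtype.ext rfl
    rw [h5, NatTrans.naturality_apply a α.op σ]
    show (a.app m σ).1.2 (𝟙 _ ≫ α) = (a.app m σ).1.2 α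
    rw [Category.id_comp]

lemma liftL_proj
    (hℓ : (SSet.boundary.{u} k).ι ≫ ℓ = (a ≫ (fMor u).app (op U)) ≫ K.map g.op)
    (ht : ∀ β, u.app (op W) (t β)
      = (K.map h'.op).app (op (SimplexCategory.mk n)) (ℓ.app _ (ULift.up β))) :
    liftL u g h' a ℓ t hℓ ht ≫ (fMor u).app (op W) = ℓ ≫ K.map h'.op := by
  apply NatTrans.ext
  funext m
  refine ConcreteCategory.hom_ext _ _ fun σ => ?_
  rfl

end LiftConstruction

end

/-- Given a local acyclic fibration `e : K_• ⟶ X_•`, an object `M` of `C` and a covering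
morphism `u : h_M ⟶ K_n` from the representable presheaf of `M` to the presheaf of
`n`-simplices of `K_•`, there exist a local acyclic fibration `e' : L_• ⟶ X_•` and a
morphism `f : L_• ⟶ K_•` over `X_•` whose degree-`n` component factors through `u`. -/
theorem exists_laf_factoring_through_covering
    {C : Type u} [SmallCategory C] (J : GrothendieckTopology C)
    {X K : SPsh C} (e : K ⟶ X) (he : IsLocalAcyclicFibration J e)
    (M : C) (n : ℕ) (u : yoneda.obj M ⟶ (evalDegree C n).obj K)
    (hu : IsCoveringMorphism J u) :
    ∃ (L : SPsh C) (e' : L ⟶ X) (f : L ⟶ K),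
      IsLocalAcyclicFibration J e' ∧ f ≫ e = e' ∧
      ∃ ψ : (evalDegree C n).obj L ⟶ yoneda.obj M,
        (evalDegree C n).map f = ψ ≫ u := by
  classical
  refine ⟨LFun u, fMor u ≫ e, fMor u, ?_, rfl, ψMor u, fact u⟩
  have hu' : Presheaf.IsLocallySurjective J u := by
    rw [← Presheaf.isLocallySurjective_presheafToSheaf_map_iff J u]
    exact (Sheaf.isLocallySurjective_iff_epi _).2 hu
  intro U k a b hab
  obtain ⟨R, hR, hlift⟩ := he U k (a ≫ (fMor u).app (op U)) b (by
    rw [Category.assoc, ← NatTrans.comp_app]; exact hab)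
  choose ℓ hℓ1 hℓ2 using hlift
  have hsieve : ∀ ⦃V : C⦄ (g : V ⟶ U) (hg : R g), ∃ T ∈ J V,
      ∀ (β : SimplexCategory.mk n ⟶ SimplexCategory.mk k) ⦃W : C⦄ (h' : W ⟶ V),
        T.arrows h' →
        (Presheaf.imageSieve u
          ((ℓ g hg).app (op (SimplexCategory.mk n)) (ULift.up β))).arrows h' := by
    intro V g hg
    exact exists_inf_sieve J _ (fun β => Presheaf.imageSieve_mem J u _)
  choose T hT1 hT2 using hsieve
  refine ⟨Sieve.bind R (fun V g hg => T g hg),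
    J.bind_covering hR (fun V g hg => hT1 g hg), ?_⟩
  rintro W q ⟨V, h', g, hg, hTg, rfl⟩
  set t : (SimplexCategory.mk n ⟶ SimplexCategory.mk k) → (W ⟶ M) := fun β =>
    Presheaf.localPreimage u _ h' (hT2 g hg β h' hTg) with htdef
  have ht : ∀ β, u.app (op W) (t β)
      = (K.map h'.op).app (op (SimplexCategory.mk n)) ((ℓ g hg).app _ (ULift.up β)) :=
    fun β => Presheaf.app_localPreimage u _ h' (hT2 g hg β h' hTg)
  refine ⟨liftL u g h' a (ℓ g hg) t (hℓ1 g hg) ht,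
    liftL_boundary u g h' a (ℓ g hg) t (hℓ1 g hg) ht, ?_⟩
  have hproj := liftL_proj u g h' a (ℓ g hg) t (hℓ1 g hg) ht
  calc liftL u g h' a (ℓ g hg) t (hℓ1 g hg) ht ≫ (fMor u ≫ e).app (op W)
      = (liftL u g h' a (ℓ g hg) t (hℓ1 g hg) ht ≫ (fMor u).app (op W)) ≫ e.app (op W) := by
        rw [NatTrans.comp_app, Category.assoc]
    _ = (ℓ g hg ≫ K.map h'.op) ≫ e.app (op W) := by rw [hproj]
    _ = ℓ g hg ≫ e.app (op V) ≫ X.map h'.op := by rw [Category.assoc, e.naturality h'.op]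
    _ = (b ≫ X.map g.op) ≫ X.map h'.op := by rw [← Category.assoc, hℓ2 g hg]
    _ = b ≫ X.map (h' ≫ g).op := by rw [Category.assoc, ← X.map_comp, ← op_comp]
end

section
/- Let C be a site and X_• a simplicial presheaf on C. For every local acyclic fibration K_• → X_• there exists a local acyclic fibration L_• → K_• such that L_• is semi-representable, i.e., each component L_n is isomorphic to a coproduct of representable presheaves; in particular the composite L_• → X_• is a semi-representable local acyclic fibration over X_•. -/
universe u

open CategoryTheory Simplicial Opposite Limits

/-- A presheaf of sets is semi-representable if it is isomorphic to a coproduct of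
representable presheaves. -/
def IsSemiRepresentable {C : Type u} [SmallCategory C] (P : Cᵒᵖ ⥤ Type u) : Prop :=
  ∃ (ι : Type u) (X : ι → C), Nonempty (P ≅ ∐ fun i => yoneda.obj (X i))

namespace SRRefine

variable {C : Type u} [SmallCategory C] (K : Cᵒᵖ ⥤ SSet.{u})

/-- A "chart" over the simplex `n`: the data of an `n`-simplex of the
semi-representable resolution. -/
structure Chart (n : SimplexCategory) : Type u where
  cell : ∀ (j : SimplexCategory) (_ : Fin (j.len + 1) →o Fin (n.len + 1)),
    Σ W : C, (K.obj (op W)).obj (op j)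
  conn : ∀ (i j : SimplexCategory) (γ : Fin (j.len + 1) →o Fin (n.len + 1))
    (δ : Fin (i.len + 1) →o Fin (j.len + 1)), (cell j γ).1 ⟶ (cell i (γ.comp δ)).1
  conn_id : ∀ (j : SimplexCategory) (γ : Fin (j.len + 1) →o Fin (n.len + 1)),
    conn j j γ OrderHom.id = 𝟙 _
  conn_comp : ∀ (i j l : SimplexCategory) (γ : Fin (j.len + 1) →o Fin (n.len + 1))
    (δ : Fin (i.len + 1) →o Fin (j.len + 1)) (ε : Fin (l.len + 1) →o Fin (i.len + 1)),
    conn l j γ (δ.comp ε) = conn i j γ δ ≫ conn l i (γ.comp δ) ε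
  compat : ∀ (i j : SimplexCategory) (γ : Fin (j.len + 1) →o Fin (n.len + 1))
    (δ : Fin (i.len + 1) →o Fin (j.len + 1)),
    (K.obj (op (cell j γ).1)).map (Quiver.Hom.op (SimplexCategory.Hom.mk δ : i ⟶ j)) (cell j γ).2 =
      (K.map (conn i j γ δ).op).app (op i) (cell i (γ.comp δ)).2

namespace Chart

variable {K}

theorem ext' {n : SimplexCategory} {D1 D2 : Chart K n}
    (hcell : ∀ j γ, D1.cell j γ = D2.cell j γ)
    (hconn : ∀ i j γ δ, HEq (D1.conn i j γ δ) (D2.conn i j γ δ)) : D1 = D2 := by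
  obtain ⟨c1, n1, _, _, _⟩ := D1
  obtain ⟨c2, n2, _, _, _⟩ := D2
  dsimp at hcell hconn
  have hc : c1 = c2 := funext fun j => funext fun γ => hcell j γ
  subst hc
  have hn : n1 = n2 := funext fun i => funext fun j => funext fun γ => funext fun δ =>
    eq_of_heq (hconn i j γ δ)
  subst hn
  rfl

/-- Restriction of a chart along a map of simplices. -/
def pull {n n' : SimplexCategory} (α : Fin (n'.len + 1) →o Fin (n.len + 1))
    (D : Chart K n) : Chart K n' where
  cell j γ := D.cell j (α.comp γ)
  conn i j γ δ := D.conn i j (α.comp γ) δ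
  conn_id j γ := D.conn_id j (α.comp γ)
  conn_comp i j l γ δ ε := D.conn_comp i j l (α.comp γ) δ ε
  compat i j γ δ := D.compat i j (α.comp γ) δ

@[simp] theorem pull_cell {n n' : SimplexCategory} (α : Fin (n'.len + 1) →o Fin (n.len + 1))
    (D : Chart K n) (j γ) : (D.pull α).cell j γ = D.cell j (α.comp γ) := rfl

@[simp] theorem pull_conn {n n' : SimplexCategory} (α : Fin (n'.len + 1) →o Fin (n.len + 1))
    (D : Chart K n) (i j γ δ) : (D.pull α).conn i j γ δ = D.conn i j (α.comp γ) δ := rfl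

theorem pull_id {n : SimplexCategory} (D : Chart K n) : D.pull OrderHom.id = D := rfl

theorem pull_pull {n n' n'' : SimplexCategory} (α : Fin (n'.len + 1) →o Fin (n.len + 1))
    (β : Fin (n''.len + 1) →o Fin (n'.len + 1)) (D : Chart K n) :
    (D.pull α).pull β = D.pull (α.comp β) := rfl

end Chart

/-- The value of the semi-representable resolution. -/
def LObj (V : Cᵒᵖ) (n : SimplexCategory) : Type u :=
  Σ D : Chart K n, (V.unop ⟶ (D.cell n OrderHom.id).1)

variable {K} in
theorem LObj.ext {V : Cᵒᵖ} {n : SimplexCategory} {p q : LObj K V n}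
    (h1 : p.1 = q.1) (h2 : HEq p.2 q.2) : p = q := by
  obtain ⟨D, h⟩ := p; obtain ⟨D', h'⟩ := q
  dsimp at h1; subst h1
  exact congrArg _ (eq_of_heq h2)

/-- The semi-representable resolution, as a simplicial presheaf. -/
def L : Cᵒᵖ ⥤ SSet.{u} where
  obj V :=
    { obj := fun m => LObj K V m.unop
      map := fun {m₁ m₂} φ => TypeCat.ofHom fun p =>
        ⟨p.1.pull φ.unop.toOrderHom,
          p.2 ≫ p.1.conn m₂.unop m₁.unop OrderHom.id φ.unop.toOrderHom⟩
      map_id := by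
        intro m
        ext p
        refine LObj.ext rfl (heq_of_eq ?_)
        show p.2 ≫ p.1.conn m.unop m.unop OrderHom.id OrderHom.id = p.2
        rw [p.1.conn_id]
        exact Category.comp_id _
      map_comp := by
        intro m₁ m₂ m₃ φ ψ
        ext p
        refine LObj.ext rfl (heq_of_eq ?_)
        show p.2 ≫ p.1.conn _ _ OrderHom.id (φ.unop.toOrderHom.comp ψ.unop.toOrderHom) = _
        rw [p.1.conn_comp]
        exact (Category.assoc _ _ _).symm }
  map {V V'} g :=
    { app := fun m => TypeCat.ofHom fun p => ⟨p.1, g.unop ≫ p.2⟩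
      naturality := fun m₁ m₂ φ => by
        ext p
        exact LObj.ext rfl (heq_of_eq (Category.assoc _ _ _).symm) }
  map_id V := by
    apply NatTrans.ext; funext m; ext p
    exact LObj.ext rfl (heq_of_eq (Category.id_comp _))
  map_comp g g' := by
    apply NatTrans.ext; funext m; ext p
    exact LObj.ext rfl (heq_of_eq (Category.assoc _ _ _))

/-- The projection from the resolution to `K`. -/
def proj : L K ⟶ K where
  app V :=
    { app := fun m => TypeCat.ofHom fun p => (K.map p.2.op).app m ((p.1.cell m.unop OrderHom.id).2)
      naturality := by
        intro m₁ m₂ φ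
        ext p
        obtain ⟨D, h⟩ := p
        show (K.map ((h ≫ D.conn m₂.unop m₁.unop OrderHom.id φ.unop.toOrderHom).op)).app m₂
            (((D.pull φ.unop.toOrderHom).cell m₂.unop OrderHom.id).2) =
          (K.obj V).map φ ((K.map h.op).app m₁ ((D.cell m₁.unop OrderHom.id).2))
        have h1 := ConcreteCategory.congr_hom ((K.map h.op).naturality φ) ((D.cell m₁.unop OrderHom.id).2)
        have h2 := D.compat m₂.unop m₁.unop OrderHom.id φ.unop.toOrderHom
        calc (K.map ((h ≫ D.conn m₂.unop m₁.unop OrderHom.id φ.unop.toOrderHom).op)).app m₂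
              (((D.pull φ.unop.toOrderHom).cell m₂.unop OrderHom.id).2)
            = ((K.map (D.conn m₂.unop m₁.unop OrderHom.id φ.unop.toOrderHom).op) ≫
                (K.map h.op)).app m₂
              ((D.cell m₂.unop (OrderHom.comp OrderHom.id φ.unop.toOrderHom)).2) := by
              rw [← K.map_comp]; rfl
          _ = (K.map h.op).app m₂
              ((K.map (D.conn m₂.unop m₁.unop OrderHom.id φ.unop.toOrderHom).op).app (op m₂.unop)
                ((D.cell m₂.unop (OrderHom.comp OrderHom.id φ.unop.toOrderHom)).2)) := rfl
          _ = (K.map h.op).app m₂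
              ((K.obj (op (D.cell m₁.unop OrderHom.id).1)).map
                (Quiver.Hom.op (SimplexCategory.Hom.mk φ.unop.toOrderHom : m₂.unop ⟶ m₁.unop))
                ((D.cell m₁.unop OrderHom.id).2)) := congrArg ((K.map h.op).app m₂) h2.symm
          _ = (K.obj V).map φ ((K.map h.op).app m₁ ((D.cell m₁.unop OrderHom.id).2)) := h1 }
  naturality {V V'} g := by
    apply NatTrans.ext; funext m; ext p
    obtain ⟨D, h⟩ := p
    show (K.map ((g.unop ≫ h).op)).app m ((D.cell m.unop OrderHom.id).2) =
      (K.map g).app m ((K.map h.op).app m ((D.cell m.unop OrderHom.id).2))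
    calc (K.map ((g.unop ≫ h).op)).app m ((D.cell m.unop OrderHom.id).2)
        = (K.map h.op ≫ K.map g).app m ((D.cell m.unop OrderHom.id).2) := by
          rw [← K.map_comp]; rfl
      _ = (K.map g).app m ((K.map h.op).app m ((D.cell m.unop OrderHom.id).2)) := rfl

section SemiRep

variable (n : ℕ)

/-- The base object of a chart. -/
def tops (D : Chart K (SimplexCategory.mk n)) : C :=
  (D.cell (SimplexCategory.mk n) OrderHom.id).1

/-- The presheaf of `n`-simplices of `L K`. -/
def Pn : Cᵒᵖ ⥤ Type u where
  obj V := LObj K V (SimplexCategory.mk n)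
  map g := TypeCat.ofHom fun p => ⟨p.1, g.unop ≫ p.2⟩
  map_id V := by ext p; exact LObj.ext rfl (heq_of_eq (Category.id_comp _))
  map_comp g g' := by ext p; exact LObj.ext rfl (heq_of_eq (Category.assoc _ _ _))

/-- Injection of a summand. -/
def inj (D : Chart K (SimplexCategory.mk n)) : yoneda.obj (tops K n D) ⟶ Pn K n where
  app V := TypeCat.ofHom fun h => ⟨D, h⟩
  naturality V V' g := rfl

/-- The cofan exhibiting `Pn` as a coproduct of representables. -/
def cofan : Cofan (fun D : Chart K (SimplexCategory.mk n) => yoneda.obj (tops K n D)) :=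
  Cofan.mk (Pn K n) (inj K n)

/-- The cofan is a colimit. -/
def cofanIsColimit : IsColimit (cofan K n) := by
  refine mkCofanColimit _
    (fun t => { app := fun V => TypeCat.ofHom fun p => (t.inj p.1).app V p.2,
                naturality := fun V V' g => by
                  ext p
                  exact ConcreteCategory.congr_hom ((t.inj p.1).naturality g) p.2 }) ?_ ?_
  · intro t D
    apply NatTrans.ext; funext V; ext h
    rfl
  · intro t m hm
    apply NatTrans.ext; funext V; ext p
    obtain ⟨D, h⟩ := p
    exact ConcreteCategory.congr_hom (congrArg (fun (τ : _ ⟶ t.pt) => τ.app V) (hm D)) h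

theorem pn_semiRep : ∃ (ι : Type u) (Y : ι → C),
    Nonempty (Pn K n ≅ ∐ fun i => yoneda.obj (Y i)) :=
  ⟨Chart K (SimplexCategory.mk n), tops K n,
    ⟨IsColimit.coconePointUniqueUpToIso (cofanIsColimit K n) (colimit.isColimit _)⟩⟩

end SemiRep

section Lift

open SimplexCategory SSet

variable {K}
variable (U : C) {k : ℕ}

theorem nsc {i j : SimplexCategory} {γ : Fin (j.len + 1) →o Fin (k + 1)}
    (δ : Fin (i.len + 1) →o Fin (j.len + 1)) (h : ¬ Function.Surjective γ) :
    ¬ Function.Surjective (γ.comp δ) := fun s => h (Function.Surjective.of_comp s)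

variable (a : (∂Δ[k] : SSet.{u}) ⟶ (L K).obj (op U)) (b : Δ[k] ⟶ K.obj (op U))

/-- The chart attached by `a` to a nonsurjective simplex `γ`. -/
def Aa (j : SimplexCategory) (γ : Fin (j.len + 1) →o Fin (k + 1))
    (h : ¬ Function.Surjective γ) : Chart K j :=
  (a.app (op j) ⟨SSet.stdSimplex.objMk γ, h⟩).1

/-- The structure morphism attached by `a` to a nonsurjective simplex `γ`. -/
def Ha (j : SimplexCategory) (γ : Fin (j.len + 1) →o Fin (k + 1))
    (h : ¬ Function.Surjective γ) : U ⟶ ((Aa U a j γ h).cell j OrderHom.id).1 :=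
  (a.app (op j) ⟨SSet.stdSimplex.objMk γ, h⟩).2

theorem a_nat {i j : SimplexCategory} (γ : Fin (j.len + 1) →o Fin (k + 1))
    (δ : Fin (i.len + 1) →o Fin (j.len + 1)) (h : ¬ Function.Surjective γ) :
    (⟨Aa U a i (γ.comp δ) (nsc δ h), Ha U a i (γ.comp δ) (nsc δ h)⟩ : LObj K (op U) i) =
      ⟨(Aa U a j γ h).pull δ,
        Ha U a j γ h ≫ (Aa U a j γ h).conn i j OrderHom.id δ⟩ :=
  ConcreteCategory.congr_hom (a.naturality (Quiver.Hom.op (SimplexCategory.Hom.mk δ : i ⟶ j)))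
    ⟨SSet.stdSimplex.objMk γ, h⟩

theorem Apull {i j : SimplexCategory} (γ : Fin (j.len + 1) →o Fin (k + 1))
    (δ : Fin (i.len + 1) →o Fin (j.len + 1)) (h : ¬ Function.Surjective γ)
    (h' : ¬ Function.Surjective (γ.comp δ)) :
    Aa U a i (γ.comp δ) h' = (Aa U a j γ h).pull δ :=
  congrArg Sigma.fst (a_nat U a γ δ h)

theorem Ha_heq {i j : SimplexCategory} (γ : Fin (j.len + 1) →o Fin (k + 1))
    (δ : Fin (i.len + 1) →o Fin (j.len + 1)) (h : ¬ Function.Surjective γ)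
    (h' : ¬ Function.Surjective (γ.comp δ)) :
    HEq (Ha U a i (γ.comp δ) h')
      (Ha U a j γ h ≫ (Aa U a j γ h).conn i j OrderHom.id δ) := by
  have e := a_nat U a γ δ h
  rw [Sigma.ext_iff] at e
  exact e.2

/-- The `k`-simplex of `K` over `U` corresponding to `b`. -/
def bb : (K.obj (op U)).obj (op (SimplexCategory.mk k)) :=
  b.app (op (SimplexCategory.mk k)) (SSet.stdSimplex.objMk OrderHom.id)

theorem bval (j : SimplexCategory) (γ : Fin (j.len + 1) →o Fin (k + 1)) :
    b.app (op j) (SSet.stdSimplex.objMk γ) =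
      (K.obj (op U)).map (Quiver.Hom.op (SimplexCategory.Hom.mk γ : j ⟶ ⦋k⦌)) (bb U b) :=
  ConcreteCategory.congr_hom (b.naturality (Quiver.Hom.op (SimplexCategory.Hom.mk γ : j ⟶ ⦋k⦌)))
    (SSet.stdSimplex.objMk OrderHom.id)

theorem habv (hab : a ≫ (proj K).app (op U) = (SSet.boundary.{u} k).ι ≫ b)
    (j : SimplexCategory) (γ : Fin (j.len + 1) →o Fin (k + 1))
    (h : ¬ Function.Surjective γ) :
    (K.map (Ha U a j γ h).op).app (op j) (((Aa U a j γ h).cell j OrderHom.id).2) =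
      (K.obj (op U)).map (Quiver.Hom.op (SimplexCategory.Hom.mk γ : j ⟶ ⦋k⦌)) (bb U b) :=
  (ConcreteCategory.congr_hom (congrArg (fun (t : (∂Δ[k] : SSet.{u}) ⟶ K.obj (op U)) => t.app (op j)) hab)
    ⟨SSet.stdSimplex.objMk γ, h⟩).trans (bval U b j γ)


theorem LObj.snd_eq' {V : Cᵒᵖ} {n : SimplexCategory} {p q : LObj K V n} (e : p = q) :
    q.2 = p.2 ≫ eqToHom (by rw [e]) := by subst e; simp

theorem Apull' {i j : SimplexCategory} (γ : Fin (j.len + 1) →o Fin (k + 1))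
    (δ : Fin (i.len + 1) →o Fin (j.len + 1)) (ρ : Fin (i.len + 1) →o Fin (k + 1))
    (hρ : ρ = γ.comp δ) (h : ¬ Function.Surjective γ) (h' : ¬ Function.Surjective ρ) :
    Aa U a i ρ h' = (Aa U a j γ h).pull δ := by
  subst hρ; exact Apull U a γ δ h h'

theorem Ha_comp {i j : SimplexCategory} (γ : Fin (j.len + 1) →o Fin (k + 1))
    (δ : Fin (i.len + 1) →o Fin (j.len + 1)) (ρ : Fin (i.len + 1) →o Fin (k + 1))
    (hρ : ρ = γ.comp δ) (h : ¬ Function.Surjective γ) (h' : ¬ Function.Surjective ρ)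
    (e : (((Aa U a j γ h).pull δ).cell i OrderHom.id).1 =
      ((Aa U a i ρ h').cell i OrderHom.id).1) :
    Ha U a i ρ h' = (Ha U a j γ h ≫ (Aa U a j γ h).conn i j OrderHom.id δ) ≫ eqToHom e := by
  subst hρ
  exact LObj.snd_eq' (a_nat U a γ δ h).symm

theorem Ha_irrel {i : SimplexCategory} (ρ ρ' : Fin (i.len + 1) →o Fin (k + 1))
    (hρ : ρ = ρ') (h : ¬ Function.Surjective ρ) (h' : ¬ Function.Surjective ρ')
    (e : ((Aa U a i ρ' h').cell i OrderHom.id).1 = ((Aa U a i ρ h).cell i OrderHom.id).1) :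
    Ha U a i ρ h = Ha U a i ρ' h' ≫ eqToHom e := by
  subst hρ; simp

theorem Kstep {m : SimplexCategoryᵒᵖ} {s t : Σ W : C, (K.obj (op W)).obj m} (e : s = t)
    {W' : C} (f : W' ⟶ s.1) (e2 : s.1 = t.1) :
    (K.map ((f ≫ eqToHom e2).op)).app m t.2 = (K.map f.op).app m s.2 := by
  subst e; simp

/-- The cells of the filler chart. -/
noncomputable def dcell (j : SimplexCategory) (γ : Fin (j.len + 1) →o Fin (k + 1)) :
    Σ W : C, (K.obj (op W)).obj (op j) :=
  if h : Function.Surjective γ then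
    ⟨U, (K.obj (op U)).map (Quiver.Hom.op (SimplexCategory.Hom.mk γ : j ⟶ ⦋k⦌)) (bb U b)⟩
  else (Aa U a j γ h).cell j OrderHom.id

theorem dcell_pos {j : SimplexCategory} {γ : Fin (j.len + 1) →o Fin (k + 1)}
    (h : Function.Surjective γ) : dcell U a b j γ =
      ⟨U, (K.obj (op U)).map (Quiver.Hom.op (SimplexCategory.Hom.mk γ : j ⟶ ⦋k⦌)) (bb U b)⟩ :=
  dif_pos h

theorem dcell_neg {j : SimplexCategory} {γ : Fin (j.len + 1) →o Fin (k + 1)}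
    (h : ¬ Function.Surjective γ) : dcell U a b j γ = (Aa U a j γ h).cell j OrderHom.id :=
  dif_neg h

/-- The connections of the filler chart. -/
noncomputable def dconn (i j : SimplexCategory) (γ : Fin (j.len + 1) →o Fin (k + 1))
    (δ : Fin (i.len + 1) →o Fin (j.len + 1)) :
    (dcell U a b j γ).1 ⟶ (dcell U a b i (γ.comp δ)).1 :=
  if h : Function.Surjective γ then
    (if h' : Function.Surjective (γ.comp δ) then
      eqToHom (by rw [dcell_pos U a b h, dcell_pos U a b h'])
    else
      eqToHom (congrArg Sigma.fst (dcell_pos U a b h)) ≫ Ha U a i (γ.comp δ) h' ≫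
        eqToHom (congrArg Sigma.fst (dcell_neg U a b h')).symm)
  else
    eqToHom (congrArg Sigma.fst (dcell_neg U a b h)) ≫ (Aa U a j γ h).conn i j OrderHom.id δ ≫
      eqToHom (by rw [dcell_neg U a b (nsc δ h), Apull U a γ δ h (nsc δ h)]; rfl)


theorem Aconn {i j l : SimplexCategory} (γ : Fin (j.len + 1) →o Fin (k + 1))
    (δ : Fin (i.len + 1) →o Fin (j.len + 1)) (ε : Fin (l.len + 1) →o Fin (i.len + 1))
    (ρ : Fin (i.len + 1) →o Fin (k + 1)) (hρ : ρ = γ.comp δ)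
    (h : ¬ Function.Surjective γ) (h2 : ¬ Function.Surjective ρ)
    (e1 : ((Aa U a i ρ h2).cell i OrderHom.id).1 =
      ((Aa U a j γ h).cell i (OrderHom.id.comp δ)).1)
    (e2 : ((Aa U a j γ h).cell l ((OrderHom.id.comp δ).comp ε)).1 =
      ((Aa U a i ρ h2).cell l (OrderHom.id.comp ε)).1) :
    (Aa U a i ρ h2).conn l i OrderHom.id ε =
      eqToHom e1 ≫ (Aa U a j γ h).conn l i (OrderHom.id.comp δ) ε ≫ eqToHom e2 := by
  subst hρ
  rw [conj_eqToHom_iff_heq', Apull U a γ δ h h2]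
  exact HEq.rfl

theorem dconn_pp {i j : SimplexCategory} (γ : Fin (j.len + 1) →o Fin (k + 1))
    (δ : Fin (i.len + 1) →o Fin (j.len + 1)) (h : Function.Surjective γ)
    (h' : Function.Surjective (γ.comp δ)) :
    dconn U a b i j γ δ = eqToHom (by rw [dcell_pos U a b h, dcell_pos U a b h']) := by
  unfold dconn
  split_ifs
  rfl

theorem dconn_pn {i j : SimplexCategory} (γ : Fin (j.len + 1) →o Fin (k + 1))
    (δ : Fin (i.len + 1) →o Fin (j.len + 1)) (h : Function.Surjective γ)
    (h' : ¬ Function.Surjective (γ.comp δ)) :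
    dconn U a b i j γ δ =
      eqToHom (congrArg Sigma.fst (dcell_pos U a b h)) ≫ Ha U a i (γ.comp δ) h' ≫
        eqToHom (congrArg Sigma.fst (dcell_neg U a b h')).symm := by
  unfold dconn
  split_ifs
  rfl

theorem dconn_n {i j : SimplexCategory} (γ : Fin (j.len + 1) →o Fin (k + 1))
    (δ : Fin (i.len + 1) →o Fin (j.len + 1)) (h : ¬ Function.Surjective γ) :
    dconn U a b i j γ δ =
      eqToHom (congrArg Sigma.fst (dcell_neg U a b h)) ≫ (Aa U a j γ h).conn i j OrderHom.id δ ≫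
        eqToHom (by rw [dcell_neg U a b (nsc δ h), Apull U a γ δ h (nsc δ h)]; rfl) := by
  unfold dconn
  split_ifs
  rfl


theorem compat1 {i j : SimplexCategory} (γ : Fin (j.len + 1) →o Fin (k + 1))
    (δ : Fin (i.len + 1) →o Fin (j.len + 1))
    {s : Σ W : C, (K.obj (op W)).obj (op j)} {t : Σ W : C, (K.obj (op W)).obj (op i)}
    (hs : s = ⟨U, (K.obj (op U)).map (Quiver.Hom.op (SimplexCategory.Hom.mk γ : j ⟶ ⦋k⦌)) (bb U b)⟩)
    (ht : t = ⟨U, (K.obj (op U)).map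
      (Quiver.Hom.op (SimplexCategory.Hom.mk (γ.comp δ) : i ⟶ ⦋k⦌)) (bb U b)⟩)
    (e2 : s.1 = t.1) :
    (K.obj (op s.1)).map (Quiver.Hom.op (SimplexCategory.Hom.mk δ : i ⟶ j)) s.2 =
      (K.map (eqToHom e2).op).app (op i) t.2 := by
  subst hs; subst ht
  simp only [eqToHom_refl, CategoryTheory.op_id, CategoryTheory.Functor.map_id,
    NatTrans.id_app, types_id_apply]
  rw [← FunctorToTypes.map_comp_apply]
  rfl

theorem compat2 {i j : SimplexCategory} (γ : Fin (j.len + 1) →o Fin (k + 1))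
    (δ : Fin (i.len + 1) →o Fin (j.len + 1)) (h' : ¬ Function.Surjective (γ.comp δ))
    (hab : a ≫ (proj K).app (op U) = (SSet.boundary.{u} k).ι ≫ b)
    {s : Σ W : C, (K.obj (op W)).obj (op j)} {t : Σ W : C, (K.obj (op W)).obj (op i)}
    (hs : s = ⟨U, (K.obj (op U)).map (Quiver.Hom.op (SimplexCategory.Hom.mk γ : j ⟶ ⦋k⦌)) (bb U b)⟩)
    (ht : t = (Aa U a i (γ.comp δ) h').cell i OrderHom.id)
    (e1 : s.1 = U) (e2 : ((Aa U a i (γ.comp δ) h').cell i OrderHom.id).1 = t.1) :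
    (K.obj (op s.1)).map (Quiver.Hom.op (SimplexCategory.Hom.mk δ : i ⟶ j)) s.2 =
      (K.map ((eqToHom e1 ≫ Ha U a i (γ.comp δ) h' ≫ eqToHom e2).op)).app (op i) t.2 := by
  subst hs; subst ht
  simp only [eqToHom_refl, Category.id_comp, Category.comp_id]
  rw [habv U a b hab i (γ.comp δ) h']
  rw [← FunctorToTypes.map_comp_apply]
  rfl

theorem compat3 {i j : SimplexCategory} (γ : Fin (j.len + 1) →o Fin (k + 1))
    (δ : Fin (i.len + 1) →o Fin (j.len + 1)) (h : ¬ Function.Surjective γ)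
    (h' : ¬ Function.Surjective (γ.comp δ))
    {s : Σ W : C, (K.obj (op W)).obj (op j)} {t : Σ W : C, (K.obj (op W)).obj (op i)}
    (hs : s = (Aa U a j γ h).cell j OrderHom.id)
    (ht : t = (Aa U a i (γ.comp δ) h').cell i OrderHom.id)
    (e1 : s.1 = ((Aa U a j γ h).cell j OrderHom.id).1)
    (e2 : ((Aa U a j γ h).cell i (OrderHom.id.comp δ)).1 = t.1) :
    (K.obj (op s.1)).map (Quiver.Hom.op (SimplexCategory.Hom.mk δ : i ⟶ j)) s.2 =
      (K.map ((eqToHom e1 ≫ (Aa U a j γ h).conn i j OrderHom.id δ ≫ eqToHom e2).op)).app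
        (op i) t.2 := by
  subst hs; subst ht
  simp only [eqToHom_refl, Category.id_comp]
  rw [Kstep (e := by rw [Apull' U a γ δ (γ.comp δ) rfl h h']; try rfl)]
  exact (Aa U a j γ h).compat i j OrderHom.id δ

/-- The filler chart. -/
noncomputable def Dtop (hab : a ≫ (proj K).app (op U) = (SSet.boundary.{u} k).ι ≫ b) :
    Chart K (SimplexCategory.mk k) where
  cell := dcell U a b
  conn := dconn U a b
  conn_id := by
    intro j γ
    show dconn U a b j j γ OrderHom.id = 𝟙 _
    unfold dconn
    split_ifs with h h'
    · rfl
    · exact absurd h h'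
    · rw [(Aa U a j γ h).conn_id]
      erw [Category.id_comp, eqToHom_trans]
      rfl
  conn_comp := by
    intro i j l γ δ ε
    show dconn U a b l j γ (δ.comp ε) = dconn U a b i j γ δ ≫ dconn U a b l i (γ.comp δ) ε
    by_cases h1 : Function.Surjective γ
    · by_cases h2 : Function.Surjective (γ.comp δ)
      · by_cases h3 : Function.Surjective (γ.comp (δ.comp ε))
        · rw [dconn_pp U a b γ (δ.comp ε) h1 h3, dconn_pp U a b γ δ h1 h2,
            dconn_pp U a b (γ.comp δ) ε h2 h3]
          simp
          rfl
        · rw [dconn_pn U a b γ (δ.comp ε) h1 h3, dconn_pp U a b γ δ h1 h2,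
            dconn_pn U a b (γ.comp δ) ε h2 h3]
          rw [Ha_irrel U a (γ.comp (δ.comp ε)) ((γ.comp δ).comp ε) rfl h3 h3 rfl]
          simp
          erw [eqToHom_trans]
          rfl
      · have h3 : ¬ Function.Surjective (γ.comp (δ.comp ε)) :=
          fun s => h2 (Function.Surjective.of_comp s)
        rw [dconn_pn U a b γ (δ.comp ε) h1 h3, dconn_pn U a b γ δ h1 h2,
          dconn_n U a b (γ.comp δ) ε h2]
        rw [Ha_comp U a (γ.comp δ) ε (γ.comp (δ.comp ε)) rfl h2 h3
          (by rw [Apull' U a (γ.comp δ) ε (γ.comp (δ.comp ε)) rfl h2 h3]; try rfl)]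
        simp
        erw [eqToHom_trans]
        rfl
    · have h2 : ¬ Function.Surjective (γ.comp δ) :=
        fun s => h1 (Function.Surjective.of_comp s)
      have h3 : ¬ Function.Surjective (γ.comp (δ.comp ε)) :=
        fun s => h1 (Function.Surjective.of_comp s)
      rw [dconn_n U a b γ (δ.comp ε) h1, dconn_n U a b γ δ h1, dconn_n U a b (γ.comp δ) ε h2]
      rw [(Aa U a j γ h1).conn_comp i j l OrderHom.id δ ε]
      rw [Aconn U a γ δ ε (γ.comp δ) rfl h1 h2
        (by rw [Apull' U a γ δ (γ.comp δ) rfl h1 h2]; try rfl)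
        (by rw [Apull' U a γ δ (γ.comp δ) rfl h1 h2]; try rfl)]
      simp
      erw [Category.assoc]
      rfl
  compat := by
    intro i j γ δ
    show (K.obj (op (dcell U a b j γ).1)).map (Quiver.Hom.op (SimplexCategory.Hom.mk δ))
        (dcell U a b j γ).2 =
      (K.map (dconn U a b i j γ δ).op).app (op i) (dcell U a b i (γ.comp δ)).2
    by_cases h : Function.Surjective γ
    · by_cases h' : Function.Surjective (γ.comp δ)
      · rw [dconn_pp U a b γ δ h h']
        exact compat1 U b γ δ (dcell_pos U a b h) (dcell_pos U a b h') _
      · rw [dconn_pn U a b γ δ h h']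
        exact compat2 U a b γ δ h' hab (dcell_pos U a b h) (dcell_neg U a b h') _ _
    · have h' : ¬ Function.Surjective (γ.comp δ) := nsc δ h
      rw [dconn_n U a b γ δ h]
      exact compat3 U a γ δ h h' (dcell_neg U a b h) (dcell_neg U a b h') _ _

@[simp] theorem Dtop_cell (hab : a ≫ (proj K).app (op U) = (SSet.boundary.{u} k).ι ≫ b) :
    (Dtop U a b hab).cell = dcell U a b := rfl

@[simp] theorem Dtop_conn (hab : a ≫ (proj K).app (op U) = (SSet.boundary.{u} k).ι ≫ b) :
    (Dtop U a b hab).conn = dconn U a b := rfl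

theorem Acell_eq {i : SimplexCategory} (ρ ρ' : Fin (i.len + 1) →o Fin (k + 1))
    (h : ρ = ρ') (hρ : ¬ Function.Surjective ρ) (hρ' : ¬ Function.Surjective ρ') :
    ((Aa U a i ρ hρ).cell i OrderHom.id).1 = ((Aa U a i ρ' hρ').cell i OrderHom.id).1 := by
  subst h; rfl

theorem final_pos {m : SimplexCategoryᵒᵖ} (ρ₁ ρ : Fin (m.unop.len + 1) →o Fin (k + 1))
    (h1 : ρ₁ = ρ) (hs : Function.Surjective ρ₁)
    {W0 : C} (e0 : U = W0) (e2 : W0 = (dcell U a b m.unop ρ₁).1) :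
    (K.map ((eqToHom e0 ≫ eqToHom e2).op)).app m (dcell U a b m.unop ρ₁).2 =
      (K.obj (op U)).map (Quiver.Hom.op (SimplexCategory.Hom.mk ρ : m.unop ⟶ ⦋k⦌)) (bb U b) := by
  subst h1; subst e0
  revert e2
  rw [dcell_pos U a b hs]
  intro e2
  simp

theorem final_neg {m : SimplexCategoryᵒᵖ} (ρ₁ ρ : Fin (m.unop.len + 1) →o Fin (k + 1))
    (h1 : ρ₁ = ρ) (hρ₁ : ¬ Function.Surjective ρ₁)
    (hab : a ≫ (proj K).app (op U) = (SSet.boundary.{u} k).ι ≫ b)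
    {W0 : C} (e0 : U = W0) (e1 : W0 = U)
    (e2 : ((Aa U a m.unop ρ₁ hρ₁).cell m.unop OrderHom.id).1 = (dcell U a b m.unop ρ₁).1) :
    (K.map ((eqToHom e0 ≫ eqToHom e1 ≫ Ha U a m.unop ρ₁ hρ₁ ≫ eqToHom e2).op)).app m
      (dcell U a b m.unop ρ₁).2 =
      (K.obj (op U)).map (Quiver.Hom.op (SimplexCategory.Hom.mk ρ : m.unop ⟶ ⦋k⦌)) (bb U b) := by
  subst h1; subst e0
  revert e2
  rw [dcell_neg U a b hρ₁]
  intro e2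
  simp only [eqToHom_refl, Category.id_comp, Category.comp_id]
  exact habv U a b hab m.unop ρ₁ hρ₁

/-- The base point of the filler. -/
noncomputable def basept (hab : a ≫ (proj K).app (op U) = (SSet.boundary.{u} k).ι ≫ b) :
    LObj K (op U) (SimplexCategory.mk k) :=
  ⟨Dtop U a b hab,
    eqToHom (congrArg Sigma.fst (dcell_pos U a b
      (show Function.Surjective
        ⇑(OrderHom.id : Fin ((SimplexCategory.mk k).len + 1) →o
          Fin ((SimplexCategory.mk k).len + 1)) from Function.surjective_id))).symm⟩

/-- The filler map. -/
noncomputable def lft (hab : a ≫ (proj K).app (op U) = (SSet.boundary.{u} k).ι ≫ b) :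
    Δ[k] ⟶ (L K).obj (op U) :=
  SSet.yonedaEquiv.symm (basept U a b hab)

theorem glift (hab : a ≫ (proj K).app (op U) = (SSet.boundary.{u} k).ι ≫ b) :
    (SSet.boundary.{u} k).ι ≫ lft U a b hab = a ∧
      lft U a b hab ≫ (proj K).app (op U) = b := by
  constructor
  · apply NatTrans.ext; funext m; ext x
    change {σ : ULift.{u, 0} (m.unop ⟶ ⦋k⦌) // _} at x
    obtain ⟨σ, hσ⟩ := x
    have hσ' : ¬ Function.Surjective ⇑(SimplexCategory.Hom.toOrderHom σ.down) := hσ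
    show ((L K).obj (op U)).map (σ.down.op) (basept U a b hab) = a.app m ⟨σ, hσ⟩
    refine LObj.ext ?_ ?_
    · show (Dtop U a b hab).pull σ.down.toOrderHom = Aa U a m.unop σ.down.toOrderHom hσ'
      refine Chart.ext' (fun j' γ' => ?_) (fun i' j' γ' δ' => ?_)
      · simp only [Chart.pull_cell, Dtop_cell]
        rw [dcell_neg U a b (nsc γ' hσ')]
        rw [Apull' U a σ.down.toOrderHom γ' (σ.down.toOrderHom.comp γ') rfl hσ' (nsc γ' hσ')]
        rfl
      · simp only [Chart.pull_conn, Dtop_conn]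
        rw [dconn_n U a b (σ.down.toOrderHom.comp γ') δ' (nsc γ' hσ')]
        apply (eqToHom_comp_heq_iff _ _ _).2; apply (comp_eqToHom_heq_iff _ _ _).2
        rw [Apull' U a σ.down.toOrderHom γ' (σ.down.toOrderHom.comp γ') rfl hσ' (nsc γ' hσ')]
        exact HEq.rfl
    · have hpf : ¬ Function.Surjective
        ⇑(OrderHom.id.comp (SimplexCategory.Hom.toOrderHom σ.down)) := hσ'
      show HEq ((basept U a b hab).2 ≫
        (Dtop U a b hab).conn m.unop (SimplexCategory.mk k) OrderHom.id σ.down.toOrderHom)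
        (Ha U a m.unop σ.down.toOrderHom hσ')
      simp only [Dtop_conn, basept]
      rw [dconn_pn U a b OrderHom.id σ.down.toOrderHom Function.surjective_id hpf]
      simp only [eqToHom_comp_heq_iff, comp_eqToHom_heq_iff]
      rw [Ha_irrel U a (OrderHom.id.comp (SimplexCategory.Hom.toOrderHom σ.down))
        σ.down.toOrderHom (OrderHom.id_comp _) hpf hσ'
        (Acell_eq U a _ _ (OrderHom.id_comp _).symm hσ' hpf)]
      apply (eqToHom_comp_heq_iff _ _ _).2; apply (eqToHom_comp_heq_iff _ _ _).2
      apply (comp_eqToHom_heq_iff _ _ _).2; apply (comp_eqToHom_heq_iff _ _ _).2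
      exact HEq.rfl
  · apply NatTrans.ext; funext m; ext σ
    show (K.map (((basept U a b hab).2 ≫
        (Dtop U a b hab).conn m.unop (SimplexCategory.mk k) OrderHom.id
          σ.down.toOrderHom).op)).app m
      (((Dtop U a b hab).pull σ.down.toOrderHom).cell m.unop OrderHom.id).2 = b.app m σ
    simp only [Chart.pull_cell, Dtop_cell, Dtop_conn, basept]
    by_cases hγ : Function.Surjective ⇑(SimplexCategory.Hom.toOrderHom σ.down)
    · have hpf : Function.Surjective
        ⇑(OrderHom.id.comp (SimplexCategory.Hom.toOrderHom σ.down)) := hγ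
      rw [dconn_pp U a b OrderHom.id σ.down.toOrderHom Function.surjective_id hpf]
      refine Eq.trans (final_pos U a b (OrderHom.id.comp σ.down.toOrderHom)
        σ.down.toOrderHom (OrderHom.id_comp _) hpf _ _) ?_
      exact (bval U b m.unop σ.down.toOrderHom).symm
    · have hpf : ¬ Function.Surjective
        ⇑(OrderHom.id.comp (SimplexCategory.Hom.toOrderHom σ.down)) := hγ
      rw [dconn_pn U a b OrderHom.id σ.down.toOrderHom Function.surjective_id hpf]
      refine Eq.trans (final_neg U a b (OrderHom.id.comp σ.down.toOrderHom)
        σ.down.toOrderHom (OrderHom.id_comp _) hpf hab _ _ _) ?_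
      exact (bval U b m.unop σ.down.toOrderHom).symm

end Lift

end SRRefine

/-- Every local acyclic fibration `K_• ⟶ X_•` admits a refinement by a local acyclic
fibration `L_• ⟶ K_•` where `L_•` is semi-representable in each degree; in particular
the composite `L_• ⟶ X_•` is then a semi-representable local acyclic fibration. -/
theorem exists_semiRepresentable_refinement
    {C : Type u} [SmallCategory C] (J : GrothendieckTopology C)
    {K X : SPsh C} (f : K ⟶ X) (hf : IsLocalAcyclicFibration J f) :
    ∃ (L : SPsh C) (g : L ⟶ K),
      IsLocalAcyclicFibration J g ∧
      (∀ n : ℕ, IsSemiRepresentable ((evalDegree C n).obj L)) ∧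
      IsLocalAcyclicFibration J (g ≫ f) := by
  refine ⟨SRRefine.L K, SRRefine.proj K, ?_, ?_, ?_⟩
  · intro U k a b hab
    obtain ⟨h1, h2⟩ := SRRefine.glift U a b hab
    refine ⟨⊤, J.top_mem U, fun V g _ =>
      ⟨SRRefine.lft U a b hab ≫ (SRRefine.L K).map g.op, ?_, ?_⟩⟩
    · rw [← Category.assoc, h1]
    · rw [Category.assoc, NatTrans.naturality, ← Category.assoc, h2]
  · intro n
    exact SRRefine.pn_semiRep K n
  · intro U k a b hab
    have hab' : (a ≫ (SRRefine.proj K).app (op U)) ≫ f.app (op U) =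
        (SSet.boundary.{u} k).ι ≫ b := by
      rw [Category.assoc]
      exact hab
    obtain ⟨R, hR, hlift⟩ := hf U k (a ≫ (SRRefine.proj K).app (op U)) b hab'
    refine ⟨R, hR, fun V g hg => ?_⟩
    obtain ⟨mV, hm1, hm2⟩ := hlift g hg
    have habV : (a ≫ (SRRefine.L K).map g.op) ≫ (SRRefine.proj K).app (op V) =
        (SSet.boundary.{u} k).ι ≫ mV := by
      rw [Category.assoc, NatTrans.naturality, ← Category.assoc, hm1, Category.assoc]
    obtain ⟨l1, l2⟩ := SRRefine.glift V (a ≫ (SRRefine.L K).map g.op) mV habV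
    refine ⟨SRRefine.lft V (a ≫ (SRRefine.L K).map g.op) mV habV, l1, ?_⟩
    rw [NatTrans.comp_app, ← Category.assoc, l2, hm2]
end
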